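/- Let G be a finite group, f : G → G, and k a positive integer. Then pres(f) ≤ k if and only if there exists an admissible subtable A of M_f whose range is all of G and whose value set has cardinality at most k. -/

import Mathlib

/-- The number of distinct values of `f`, i.e. `V(f) = #Im(f)`. -/
def imCard {G : Type*} [Fintype G] [DecidableEq G] (f : G → G) : ℕ :=
  (Finset.univ.image f).card

/-- The set of preimages of `b` under `f`. -/
def preim {G : Type*} [Fintype G] [DecidableEq G] (f : G → G) (b : G) : Finset G :=
  Finset.univ.filter (fun x => f x = b)

/-- The uniformity `u(f) = max_{b ∈ G} #preim(f,b)`. -/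
def unif {G : Type*} [Fintype G] [DecidableEq G] (f : G → G) : ℕ :=
  Finset.univ.sup (fun b => (preim f b).card)

/-- `P_t = {b ∈ G : #preim(f,b) = t}`. -/
def Pset {G : Type*} [Fintype G] [DecidableEq G] (f : G → G) (t : ℕ) : Finset G :=
  Finset.univ.filter (fun b => (preim f b).card = t)

/-- `A` is an admissible subtable of the subtraction table `M_f` with value set `S`:
the positions of `A` lie in `G × Im(f)`, the entry at position `(r,c)` is `r - c`,
(A1) `S` is the set of values of the entries of `A`, and
(A2) every column `c ∈ Im(f)` contains exactly `#preim(f,c)` positions of `A`. -/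
def IsAdmissible {G : Type*} [AddGroup G] [Fintype G] [DecidableEq G]
    (f : G → G) (A : Finset (G × G)) (S : Finset G) : Prop :=
  (∀ p ∈ A, p.2 ∈ Finset.univ.image f) ∧
  S = A.image (fun p => p.1 - p.2) ∧
  ∀ c ∈ Finset.univ.image f, (A.filter (fun p => p.2 = c)).card = (preim f c).card

/-- Permutation resemblance: `pres(f) = min{V(g) : g + f is a permutation of G}`. -/
noncomputable def pres {G : Type*} [AddGroup G] [Fintype G] [DecidableEq G] (f : G → G) : ℕ :=
  sInf {n | ∃ g : G → G, Function.Bijective (fun x => g x + f x) ∧ imCard g = n}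

/-!
Given `g` with `g + f` bijective, the positions `(g x + f x, f x)` form an admissible subtable
with full range and value set `Im(g)`. Conversely, since column `c` of an admissible subtable `A`
holds exactly `#preim(f,c)` positions, the elements `x ∈ G` can be matched bijectively with the
positions of `A` so that `x` gets a position `(σ x, f x)` in column `f x`. Full range makes `σ`
a permutation, and `g x := σ x - f x` has `g + f = σ` and takes its values among the
entries of `A`.
-/

open Finset

section

variable {G : Type*} [AddGroup G] [Fintype G] [DecidableEq G]

lemma pres_le_imCard {f g : G → G} (hg : Function.Bijective fun x => g x + f x) :
    pres f ≤ imCard g := by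
  rw [pres]
  exact Nat.sInf_le ⟨g, hg, rfl⟩

lemma exists_bijective_add_imCard_eq_pres (f : G → G) :
    ∃ g : G → G, Function.Bijective (fun x => g x + f x) ∧ imCard g = pres f := by
  have hne :
      {n | ∃ g : G → G, Function.Bijective (fun x => g x + f x) ∧ imCard g = n}.Nonempty :=
    ⟨_, fun x => x - f x, by simp only [sub_add_cancel]; exact Function.bijective_id, rfl⟩
  exact Nat.sInf_mem hne

lemma isAdmissible_image_add {f g : G → G} (hg : Function.Injective fun x => g x + f x) :
    IsAdmissible f (univ.image fun x => (g x + f x, f x)) (univ.image g) := by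
  have hinj : Function.Injective fun x => (g x + f x, f x) :=
    fun x y hxy => hg (congrArg Prod.fst hxy)
  refine ⟨?_, ?_, fun c _ => ?_⟩
  · intro p hp
    obtain ⟨x, -, rfl⟩ := mem_image.mp hp
    exact mem_image_of_mem f (mem_univ x)
  · simp only [image_image, Function.comp_def, add_sub_cancel_right]
  · rw [filter_image, card_image_of_injective _ hinj]
    rfl

lemma IsAdmissible.card_filter_snd_eq {f : G → G} {A : Finset (G × G)} {S : Finset G}
    (hA : IsAdmissible f A S) (c : G) :
    (A.filter fun p => p.2 = c).card = (preim f c).card := by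
  by_cases hc : c ∈ univ.image f
  · exact hA.2.2 c hc
  · have hcol : A.filter (fun p => p.2 = c) = ∅ :=
      filter_eq_empty_iff.mpr fun p hp hpc => hc (hpc ▸ hA.1 p hp)
    have hpre : preim f c = ∅ :=
      filter_eq_empty_iff.mpr fun x _ hx => hc (hx ▸ mem_image_of_mem f (mem_univ x))
    rw [hcol, hpre, card_empty, card_empty]

lemma IsAdmissible.exists_equiv {f : G → G} {A : Finset (G × G)} {S : Finset G}
    (hA : IsAdmissible f A S) : ∃ e : G ≃ A, ∀ x, (e x : G × G).2 = f x := by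
  have hfiber :
      ∀ c, Fintype.card {x // f x = c} = Fintype.card {p : A // (p : G × G).2 = c} := by
    intro c
    rw [Fintype.card_subtype, Fintype.card_subtype,
      ← card_map (Function.Embedding.subtype (· ∈ A))]
    refine (hA.card_filter_snd_eq c).symm.trans (congrArg card ?_)
    ext p
    aesop
  exact ⟨_, Equiv.ofFiberEquiv_map (g := fun p : A => (p : G × G).2)
    fun c => Fintype.equivOfCardEq (hfiber c)⟩

lemma IsAdmissible.exists_bijective_add_imCard_le {f : G → G} {A : Finset (G × G)}
    {S : Finset G} (hA : IsAdmissible f A S) (hrange : A.image Prod.fst = univ) :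
    ∃ g : G → G, Function.Bijective (fun x => g x + f x) ∧ imCard g ≤ S.card := by
  obtain ⟨e, he⟩ := hA.exists_equiv
  let σ : G → G := fun x => (e x : G × G).1
  have hσ : Function.Bijective σ := by
    refine Finite.surjective_iff_bijective.mp fun r => ?_
    obtain ⟨p, hp, rfl⟩ := mem_image.mp (hrange ▸ mem_univ r)
    exact ⟨e.symm ⟨p, hp⟩, by simp [σ]⟩
  refine ⟨fun x => σ x - f x, by simpa only [sub_add_cancel] using hσ, card_le_card ?_⟩
  intro y hy
  obtain ⟨x, -, rfl⟩ := mem_image.mp hy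
  rw [hA.2.1, ← he x]
  exact mem_image_of_mem _ (e x).2

end

theorem pres_le_iff_exists_admissible_general {G : Type*} [AddGroup G] [Fintype G]
    [DecidableEq G] (f : G → G) (k : ℕ) :
    pres f ≤ k ↔ ∃ (A : Finset (G × G)) (S : Finset G),
      IsAdmissible f A S ∧ A.image Prod.fst = Finset.univ ∧ S.card ≤ k := by
  constructor
  · intro h
    obtain ⟨g, hg, hcard⟩ := exists_bijective_add_imCard_eq_pres f
    refine ⟨_, _, isAdmissible_image_add hg.injective, ?_, hcard.trans_le h⟩
    rw [image_image]
    exact image_univ_of_surjective hg.surjective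
  · rintro ⟨A, S, hA, hrange, hS⟩
    obtain ⟨g, hg, hcard⟩ := hA.exists_bijective_add_imCard_le hrange
    exact (pres_le_imCard hg).trans (hcard.trans hS)

/-- `pres(f) ≤ k` iff there is an admissible subtable of `M_f` whose range is all of `G`
and whose value set has cardinality at most `k`. -/
theorem pres_le_iff_exists_admissible {G : Type*} [AddGroup G] [Fintype G]
    [DecidableEq G] (f : G → G) (k : ℕ) (hk : 0 < k) :
    pres f ≤ k ↔ ∃ (A : Finset (G × G)) (S : Finset G),
      IsAdmissible f A S ∧ A.image Prod.fst = Finset.univ ∧ S.card ≤ k :=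
  pres_le_iff_exists_admissible_general f k
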